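/- arXiv:1512.02681 — 2 statements merged into one kernel-verified Lean document; each statement's English description precedes it below -/
import Mathlib

section
/- Let (α_n)_{n≥1} be a sequence of nonnegative reals and suppose there exists d' > 0 such that ∑_{k=1}^n log(1+α_k) ≤ d' · log(n+1) for all n ≥ 1. Then for every β ∈ (0,1), the set E_β = {n ∈ ℕ : α_n > n^{-β}} has natural density zero, i.e. (1/n)·#([1,n] ∩ E_β) → 0 as n → ∞. -/
/-!
Every `k ≤ n` in `E_β` has `α_k > k^{-β} ≥ n^{-β}`, hence contributes at least
`log (1 + n^{-β}) ≥ n^{-β} / 2` to `∑_{k ≤ n} log (1 + α_k) ≤ d' log (n + 1)`.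
So `#(E_β ∩ [1, n]) ≤ 2 d' n^β log (n + 1)`, which is `o(n)` because `β < 1`.
-/

open Filter Finset
open scoped Classical Topology

namespace Real

lemma half_le_log_one_add {x : ℝ} (hx₀ : 0 ≤ x) (hx₁ : x ≤ 1) : x / 2 ≤ log (1 + x) := by
  have hpos : 0 < 1 + x := by linarith
  calc x / 2 ≤ x / (1 + x) := div_le_div_of_nonneg_left hx₀ hpos (by linarith)
    _ = 1 - (1 + x)⁻¹ := by field_simp; ring
    _ ≤ log (1 + x) := one_sub_inv_le_log_of_pos hpos

lemma tendsto_log_add_one_div_rpow_atTop {γ : ℝ} (hγ : 0 < γ) :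
    Tendsto (fun x : ℝ => log (x + 1) / x ^ γ) atTop (𝓝 0) := by
  have hshift : Tendsto (fun x : ℝ => (log (x + 1) - log x) / x ^ γ) atTop (𝓝 0) :=
    (tendsto_log_comp_add_sub_log 1).div_atTop (tendsto_rpow_atTop hγ)
  have hlog : Tendsto (fun x : ℝ => log x / x ^ γ) atTop (𝓝 0) :=
    (isLittleO_log_rpow_atTop hγ).tendsto_div_nhds_zero
  simpa [← add_div] using hshift.add hlog

end Real

lemma Finset.card_filter_mul_le_sum {ι : Type*} (s : Finset ι) (p : ι → Prop) [DecidablePred p]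
    {f : ι → ℝ} {c : ℝ} (hf : ∀ i ∈ s, 0 ≤ f i) (hc : ∀ i ∈ s, p i → c ≤ f i) :
    #(s.filter p) * c ≤ ∑ i ∈ s, f i :=
  calc #(s.filter p) * c = ∑ _i ∈ s.filter p, c := by rw [sum_const, nsmul_eq_mul]
    _ ≤ ∑ i ∈ s.filter p, f i := sum_le_sum fun i hi => hc i (mem_filter.1 hi).1 (mem_filter.1 hi).2
    _ ≤ ∑ i ∈ s, f i := sum_le_sum_of_subset_of_nonneg (filter_subset _ _) fun i hi _ => hf i hi

lemma card_filter_rpow_neg_lt_mul_le_sum_log {α : ℕ → ℝ} (hα : ∀ n, 0 ≤ α n) {β : ℝ}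
    (hβ : 0 ≤ β) (n : ℕ) :
    #((Icc 1 n).filter fun k : ℕ => (k : ℝ) ^ (-β) < α k) * ((n : ℝ) ^ (-β) / 2) ≤
      ∑ k ∈ Icc 1 n, Real.log (1 + α k) := by
  refine card_filter_mul_le_sum _ _ (fun k _ => Real.log_nonneg (by linarith [hα k])) ?_
  intro k hk hlt
  obtain ⟨hk₁, hkn⟩ := mem_Icc.1 hk
  have hk₁' : (1 : ℝ) ≤ k := by exact_mod_cast hk₁
  have hkn' : (k : ℝ) ≤ n := by exact_mod_cast hkn
  have hn_le_k : (n : ℝ) ^ (-β) ≤ (k : ℝ) ^ (-β) :=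
    Real.rpow_le_rpow_of_nonpos (by linarith) hkn' (by linarith)
  have hn_le_one : (n : ℝ) ^ (-β) ≤ 1 :=
    Real.rpow_le_one_of_one_le_of_nonpos (by linarith) (by linarith)
  calc (n : ℝ) ^ (-β) / 2 ≤ Real.log (1 + (n : ℝ) ^ (-β)) :=
        Real.half_le_log_one_add (by positivity) hn_le_one
    _ ≤ Real.log (1 + α k) := Real.log_le_log (by positivity) (by linarith)

theorem density_zero_of_log_growth_general
    (α : ℕ → ℝ) (hα : ∀ n, 0 ≤ α n) (d' : ℝ)
    (hsum : ∀ n : ℕ, 1 ≤ n →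
      ∑ k ∈ Finset.Icc 1 n, Real.log (1 + α k) ≤ d' * Real.log (n + 1))
    (β : ℝ) (hβ : β ∈ Set.Ioo (0 : ℝ) 1) :
    Tendsto (fun n : ℕ =>
        (((Finset.Icc 1 n).filter (fun k : ℕ => ((k : ℝ)) ^ (-β) < α k)).card : ℝ) / n)
      atTop (nhds 0) := by
  obtain ⟨hβ₀, hβ₁⟩ := hβ
  have hbound : Tendsto (fun n : ℕ => 2 * d' * (Real.log (n + 1) / (n : ℝ) ^ (1 - β))) atTop
      (𝓝 0) := by
    simpa using ((Real.tendsto_log_add_one_div_rpow_atTop (sub_pos.2 hβ₁)).comp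
      tendsto_natCast_atTop_atTop).const_mul (2 * d')
  refine tendsto_of_tendsto_of_tendsto_of_le_of_le' tendsto_const_nhds hbound
    (Eventually.of_forall fun n => by positivity) ?_
  filter_upwards [eventually_ge_atTop 1] with n hn
  have hn₀ : (0 : ℝ) < n := by exact_mod_cast hn
  have hrpow : (n : ℝ) ^ (-β) = (n : ℝ) ^ (1 - β) / n := by
    rw [← Real.rpow_sub_one hn₀.ne', sub_sub_cancel_left]
  have hcount := (card_filter_rpow_neg_lt_mul_le_sum_log hα hβ₀.le n).trans (hsum n hn)
  calc _ = _ * ((n : ℝ) ^ (-β) / 2) * (2 / (n : ℝ) ^ (1 - β)) := by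
        rw [hrpow]; field_simp
    _ ≤ d' * Real.log (n + 1) * (2 / (n : ℝ) ^ (1 - β)) :=
        mul_le_mul_of_nonneg_right hcount (by positivity)
    _ = _ := by ring

/-- If `∑_{k=1}^n log(1+α_k) ≤ d' log(n+1)` for all `n ≥ 1` with `α_k ≥ 0`, then for every
`β ∈ (0,1)` the set `E_β = {n : α_n > n^{-β}}` has natural density zero. -/
theorem density_zero_of_log_growth
    (α : ℕ → ℝ) (hα : ∀ n, 0 ≤ α n) (d' : ℝ) (hd' : 0 < d')
    (hsum : ∀ n : ℕ, 1 ≤ n →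
      ∑ k ∈ Finset.Icc 1 n, Real.log (1 + α k) ≤ d' * Real.log (n + 1))
    (β : ℝ) (hβ : β ∈ Set.Ioo (0 : ℝ) 1) :
    Tendsto (fun n : ℕ =>
        (((Finset.Icc 1 n).filter (fun k : ℕ => ((k : ℝ)) ^ (-β) < α k)).card : ℝ) / n)
      atTop (nhds 0) :=
  density_zero_of_log_growth_general α hα d' hsum β hβ
end

section
/- Let G be a group and K ⊆ G a generating set containing the identity. Suppose ℓ : G → [0,∞) satisfies: (i) ℓ is a uniform limit on each K^p of partial sums ∑_{n∈A, n≤N}(1-ω_n), where each ω_n vanishes outside K^{2⌈(n+1)^γ⌉} and 0 ≤ ω_n ≤ 1; then for s ∉ K^{2m} with m ≥ ⌊(N+1)^γ⌋, one has ℓ(s) ≥ #{n ∈ A : n ≤ N}. -/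
open Filter
open scoped Pointwise Classical

lemma eq_zero_of_notMem_pow_of_le {G : Type*} [Monoid G] {K : Set G} (hone : (1 : G) ∈ K)
    {f : G → ℝ} {j m : ℕ} (hf : ∀ s, s ∉ K ^ j → f s = 0) (hjm : j ≤ m) {s : G}
    (hs : s ∉ K ^ m) : f s = 0 :=
  hf s fun hsj => hs (Set.pow_subset_pow_right hone hjm hsj)

lemma le_of_le_rpow_of_floor_rpow_le {γ : ℝ} (hγ : 0 ≤ γ) {k n N m : ℕ}
    (hk : (k : ℝ) ≤ ((n : ℝ) + 1) ^ γ) (hn : n ≤ N) (hm : ⌊((N : ℝ) + 1) ^ γ⌋₊ ≤ m) :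
    k ≤ m := by
  have hnN : (n : ℝ) + 1 ≤ (N : ℝ) + 1 := by exact_mod_cast Nat.succ_le_succ hn
  exact (Nat.le_floor (hk.trans (Real.rpow_le_rpow (by positivity) hnN hγ))).trans hm

lemma card_filter_range_le_sum {A : Set ℕ} {f : ℕ → ℝ} {N M : ℕ} (hNM : N ≤ M)
    (hone : ∀ n ≤ N, f n = 1) (hnonneg : ∀ n, 0 ≤ f n) :
    (((Finset.range (N + 1)).filter (· ∈ A)).card : ℝ) ≤
      ∑ n ∈ (Finset.range (M + 1)).filter (· ∈ A), f n := by
  calc (((Finset.range (N + 1)).filter (· ∈ A)).card : ℝ)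
      = ∑ n ∈ (Finset.range (N + 1)).filter (· ∈ A), f n := by
        rw [Finset.cast_card]
        refine Finset.sum_congr rfl fun n hn => (hone n ?_).symm
        exact Nat.lt_succ_iff.1 (Finset.mem_range.1 (Finset.mem_filter.1 hn).1)
    _ ≤ ∑ n ∈ (Finset.range (M + 1)).filter (· ∈ A), f n :=
        Finset.sum_le_sum_of_subset_of_nonneg
          (Finset.filter_subset_filter _ (Finset.range_subset_range.2 (by omega)))
          fun n _ _ => hnonneg n

/-- Properness estimate in the proof of Theorem 1.1: if `ℓ` is the uniform limit on each `K^p`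
of the partial sums `∑_{n ∈ A, n ≤ N} (1 - ω_n)`, where `0 ≤ ω_n ≤ 1` and `ω_n` vanishes
outside `K^{2 k(n)}` with `k(n) ≤ (n+1)^γ`, then for `s ∉ K^{2m}` with
`m ≥ ⌊(N+1)^γ⌋` one has `ℓ(s) ≥ #{n ∈ A : n ≤ N}`. -/
theorem properness_lower_bound
    {G : Type*} [Group G] (K : Set G) (hone : (1 : G) ∈ K)
    (hgen : ∀ g : G, ∃ p : ℕ, g ∈ K ^ p)
    (ω : ℕ → G → ℝ) (hbdd : ∀ n s, 0 ≤ ω n s ∧ ω n s ≤ 1)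
    (γ : ℝ) (hγ : 0 < γ) (A : Set ℕ)
    (k : ℕ → ℕ) (hk : ∀ n : ℕ, (k n : ℝ) ≤ ((n : ℝ) + 1) ^ γ)
    (hsupp : ∀ n : ℕ, ∀ s : G, s ∉ K ^ (2 * k n) → ω n s = 0)
    (ℓ : G → ℝ)
    (hconv : ∀ p : ℕ, TendstoUniformlyOn
      (fun N s => ∑ n ∈ (Finset.range (N + 1)).filter (· ∈ A), (1 - ω n s)) ℓ atTop (K ^ p)) :
    ∀ (N m : ℕ), ⌊(((N : ℝ) + 1) ^ γ)⌋₊ ≤ m → ∀ s : G, s ∉ K ^ (2 * m) →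
      (((Finset.range (N + 1)).filter (· ∈ A)).card : ℝ) ≤ ℓ s := by
  intro N m hm s hs
  obtain ⟨p, hp⟩ := hgen s
  have hω : ∀ n ≤ N, ω n s = 0 := fun n hn =>
    eq_zero_of_notMem_pow_of_le hone (hsupp n)
      (Nat.mul_le_mul_left 2 (le_of_le_rpow_of_floor_rpow_le hγ.le (hk n) hn hm)) hs
  refine ge_of_tendsto ((hconv p).tendsto_at hp) ?_
  filter_upwards [eventually_ge_atTop N] with M hM
  exact card_filter_range_le_sum hM (fun n hn => by rw [hω n hn, sub_zero])
    fun n => sub_nonneg.2 (hbdd n s).2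
end
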